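/- arXiv:2105.12621 — 5 statements merged into one kernel-verified Lean document; each statement's English description precedes it below -/
import Mathlib

section
/- Let V be a vector space over a field K, let F be a field extension of K, let G be a group of K-algebra automorphisms of F, and let W be an F-subspace of F ⊗_K V that is stable under the action of G on the first tensor factor. Then W is spanned over F by elements of W^G, the set of G-fixed elements of W (which lie in F^G ⊗_K V). -/
/-! A `K`-basis of `V` identifies `F ⊗[K] V` with finitely supported coordinate vectors over `F`,
on which `G` acts coordinatewise. A nonzero `u ∈ W` of minimal support, scaled to have a
coordinate equal to `1`, is fixed: `g • u - u ∈ W` vanishes at that coordinate, so it has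
smaller support and must be zero. Subtracting a multiple of such a `u` (taken with support inside
that of `w`) from `w ∈ W` shrinks the support of `w`, and induction on its size finishes. -/

open TensorProduct

namespace Finsupp

variable {ι G F : Type*} [DivisionRing F] (σ : G → F →+* F)

theorem exists_fixed_mem_support_subset {W : Submodule F (ι →₀ F)}
    (hW : ∀ g, ∀ w ∈ W, w.mapRange (σ g) (map_zero _) ∈ W) {w : ι →₀ F} (hw : w ∈ W)
    (hw0 : w ≠ 0) :
    ∃ u ∈ W, (∀ g, u.mapRange (σ g) (map_zero _) = u) ∧ u.support ⊆ w.support ∧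
      ∃ j ∈ w.support, u j = 1 := by
  classical
  have hex : ∃ n, ∃ u ∈ W, u ≠ 0 ∧ u.support ⊆ w.support ∧ u.support.card = n :=
    ⟨_, w, hw, hw0, subset_rfl, rfl⟩
  obtain ⟨u, huW, hu0, husupp, hcard⟩ := Nat.find_spec hex
  obtain ⟨j, hj⟩ := support_nonempty_iff.mpr hu0
  have huj : u j ≠ 0 := mem_support_iff.mp hj
  set v := (u j)⁻¹ • u
  have hvsupp : v.support = u.support := support_smul_eq (inv_ne_zero huj)
  have hvj : v j = 1 := by simp [v, huj]
  refine ⟨v, W.smul_mem _ huW, fun g => ?_, hvsupp ▸ husupp, j, husupp hj, hvj⟩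
  by_contra hne
  have hdsupp : (v.mapRange (σ g) (map_zero _) - v).support ⊆ u.support.erase j := by
    intro i hi
    refine Finset.mem_erase.mpr ⟨?_, ?_⟩
    · rintro rfl
      simp [hvj] at hi
    · rw [← hvsupp]
      exact (Finset.mem_union.mp (support_sub hi)).elim (support_mapRange ·) id
  have hmin := Nat.find_min' hex ⟨_, W.sub_mem (hW g v (W.smul_mem _ huW)) (W.smul_mem _ huW),
    sub_ne_zero.mpr hne, hdsupp.trans ((Finset.erase_subset _ _).trans husupp), rfl⟩
  have hlt := (Finset.card_le_card hdsupp).trans_lt (Finset.card_erase_lt_of_mem hj)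
  exact hmin.not_gt (hcard ▸ hlt)

theorem eq_span_fixed_of_mapRange_mem {W : Submodule F (ι →₀ F)}
    (hW : ∀ g, ∀ w ∈ W, w.mapRange (σ g) (map_zero _) ∈ W) :
    W = Submodule.span F {w | w ∈ W ∧ ∀ g, w.mapRange (σ g) (map_zero _) = w} := by
  classical
  refine le_antisymm (fun w hw => ?_) (Submodule.span_le.mpr fun _ h => h.1)
  induction hn : w.support.card using Nat.strong_induction_on generalizing w with
  | _ n ih =>
  rcases eq_or_ne w 0 with rfl | hw0
  · exact zero_mem _
  obtain ⟨u, huW, hufix, husupp, j, hj, huj⟩ := exists_fixed_mem_support_subset σ hW hw hw0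
  have hrest : (w - w j • u).support ⊆ w.support.erase j := by
    intro i hi
    refine Finset.mem_erase.mpr ⟨?_, ?_⟩
    · rintro rfl
      simp [huj] at hi
    · exact (Finset.mem_union.mp (support_sub hi)).elim id (fun h => husupp (support_smul h))
  have hlt : (w - w j • u).support.card < n :=
    hn ▸ (Finset.card_le_card hrest).trans_lt (Finset.card_erase_lt_of_mem hj)
  have := ih _ hlt _ (W.sub_mem hw (W.smul_mem _ huW)) rfl
  simpa using add_mem this (Submodule.smul_mem _ (w j) (Submodule.subset_span ⟨huW, hufix⟩))

end Finsupp

theorem Module.Basis.baseChange_repr_rTensor {K F V ι : Type*} [CommSemiring K] [CommSemiring F]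
    [Algebra K F] [AddCommMonoid V] [Module K V] (b : Module.Basis ι K V) (σ : F →ₐ[K] F)
    (x : F ⊗[K] V) :
    (b.baseChange F).repr (σ.toLinearMap.rTensor V x) =
      ((b.baseChange F).repr x).mapRange σ (map_zero σ) := by
  induction x using TensorProduct.induction_on with
  | zero => simp
  | tmul c v =>
    ext i
    simp [Algebra.smul_def]
  | add x y hx hy => simp only [map_add, hx, hy, Finsupp.mapRange_add (map_add σ)]

theorem Submodule.eq_span_fixed_of_linearEquiv_finsupp {ι G F M : Type*} [DivisionRing F]
    [AddCommMonoid M] [Module F M] (e : M ≃ₗ[F] (ι →₀ F)) (σ : G → F →+* F) (τ : G → M → M)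
    (he : ∀ g x, e (τ g x) = (e x).mapRange (σ g) (map_zero _)) {W : Submodule F M}
    (hW : ∀ g, ∀ w ∈ W, τ g w ∈ W) :
    W = Submodule.span F {w | w ∈ W ∧ ∀ g, τ g w = w} := by
  have hWe : ∀ g, ∀ u ∈ W.map (e : M →ₗ[F] ι →₀ F),
      u.mapRange (σ g) (map_zero _) ∈ W.map (e : M →ₗ[F] ι →₀ F) := by
    rintro g _ ⟨w, hw, rfl⟩
    exact ⟨τ g w, hW g w hw, he g w⟩
  have hfixed : e.symm '' {u | u ∈ W.map (e : M →ₗ[F] ι →₀ F) ∧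
      ∀ g, u.mapRange (σ g) (map_zero _) = u} = {w | w ∈ W ∧ ∀ g, τ g w = w} := by
    ext w
    simp only [Set.mem_image, Set.mem_ofPred_eq, Submodule.mem_map_equiv]
    constructor
    · rintro ⟨u, ⟨huW, hu⟩, rfl⟩
      exact ⟨huW, fun g => e.injective (by rw [he, e.apply_symm_apply, hu])⟩
    · rintro ⟨hw, hfix⟩
      exact ⟨e w, ⟨by simpa, fun g => by rw [← he, hfix]⟩, e.symm_apply_apply w⟩
  rw [← hfixed, Submodule.span_image_linearEquiv, ← Finsupp.eq_span_fixed_of_mapRange_mem σ hWe]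
  exact ((Submodule.map_symm_eq_iff e).mpr rfl).symm

/-- Let `V` be a vector space over a field `K`, let `F/K` be a field extension, let `G` be a
group acting on `F` by `K`-algebra automorphisms, and let `W` be an `F`-subspace of
`F ⊗[K] V` stable under the action of `G` on the first tensor factor.  Then `W` is spanned
over `F` by its `G`-fixed elements. -/
theorem span_of_invariants
    (K F V G : Type) [Field K] [Field F] [Algebra K F]
    [AddCommGroup V] [Module K V] [Group G]
    (ρ : G →* (F ≃ₐ[K] F))
    (W : Submodule F (F ⊗[K] V))
    (hW : ∀ g : G, ∀ w ∈ W, LinearMap.rTensor V (ρ g).toLinearMap w ∈ W) :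
    W = Submodule.span F
      {w : F ⊗[K] V | w ∈ W ∧ ∀ g : G, LinearMap.rTensor V (ρ g).toLinearMap w = w} :=
  Submodule.eq_span_fixed_of_linearEquiv_finsupp
    ((Module.Basis.ofVectorSpace K V).baseChange F).repr (fun g => (ρ g : F →+* F)) _
    (fun g => (Module.Basis.ofVectorSpace K V).baseChange_repr_rTensor (ρ g : F →ₐ[K] F)) hW
end

section
/- Let X be an affine GL-scheme and x a point of X. Define the generalized orbit O_x of x as the set of points y with O̅_y = O̅_x, where O̅_z denotes the smallest closed GL-stable subset containing z. Then O_x equals the intersection of all non-empty open GL-stable subsets of O̅_x. -/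
open TensorProduct PiTensorProduct

noncomputable section

/-- `𝐕 = ⋃ₙ Kⁿ`, the standard representation of the infinite general linear group:
the `K`-vector space with countable basis `e 0, e 1, e 2, …`. -/
abbrev Vec (K : Type) [Field K] : Type := ℕ →₀ K

/-- The `i`-th standard basis vector of `𝐕`. -/
def ee (K : Type) [Field K] (i : ℕ) : Vec K := Finsupp.single i 1

/-- The infinite general linear group `GL = ⋃ₙ GLₙ(K)`, realized as the set of linear
automorphisms of `𝐕` which, for some `N`, fix all basis vectors `e i` with `i ≥ N` and
preserve the span of `e 0, …, e (N-1)`. -/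
def GLSet (K : Type) [Field K] : Set (Vec K ≃ₗ[K] Vec K) :=
  {g | ∃ N : ℕ,
    (∀ i, N ≤ i → g (ee K i) = ee K i ∧ g.symm (ee K i) = ee K i) ∧
    (∀ i, i < N → ((g (ee K i)).support : Set ℕ) ⊆ Set.Iio N ∧
      ((g.symm (ee K i)).support : Set ℕ) ⊆ Set.Iio N)}

/-- The subgroup `GLₙ(K) ⊆ GL`: elements of `GL` witnessed by the given `N`. -/
def GLn (K : Type) [Field K] (N : ℕ) : Set (Vec K ≃ₗ[K] Vec K) :=
  {g | (∀ i, N ≤ i → g (ee K i) = ee K i ∧ g.symm (ee K i) = ee K i) ∧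
    (∀ i, i < N → ((g (ee K i)).support : Set ℕ) ⊆ Set.Iio N ∧
      ((g.symm (ee K i)).support : Set ℕ) ⊆ Set.Iio N)}

variable (K : Type) [Field K]

/-- A `K`-module `R` with a `GL`-action (given by `act`) is a *polynomial representation*
if it embeds `GL`-equivariantly into a direct sum of tensor powers of `𝐕`. -/
def IsPolyRep (R : Type) [AddCommGroup R] [Module K R]
    (act : (Vec K ≃ₗ[K] Vec K) → (R →ₗ[K] R)) : Prop :=
  ∃ (ι : Type) (d : ι → ℕ)
    (emb : R →ₗ[K] DirectSum ι (fun i => ⨂[K] (_j : Fin (d i)), Vec K)),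
      Function.Injective emb ∧
      ∀ g ∈ GLSet K, ∀ x : R,
        emb (act g x) =
          DFinsupp.mapRange.linearMap
            (fun i => PiTensorProduct.map (fun _ : Fin (d i) => g.toLinearMap)) (emb x)

variable (R : Type) [CommRing R] [Algebra K R]
variable (act : (Vec K ≃ₗ[K] Vec K) → (R ≃ₐ[K] R))

/-- The underlying polynomial-representation condition for the `GL`-algebra `R`. -/
def IsGLAlgebra : Prop :=
  (act 1 = AlgEquiv.refl) ∧
  (∀ g ∈ GLSet K, ∀ h ∈ GLSet K, act (g * h) = (act h).trans (act g)) ∧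
  IsPolyRep K R (fun g => (act g).toLinearMap)

/-- `R` is finitely `GL`-generated. -/
def IsFinGLGen : Prop :=
  ∃ s : Finset R,
    Algebra.adjoin K (⋃ f ∈ s, {y : R | ∃ g ∈ GLSet K, y = act g f}) = ⊤

/-- The homeomorphism of `X = Spec R` induced by `g ∈ GL`. -/
def pt (g : Vec K ≃ₗ[K] Vec K) : PrimeSpectrum R → PrimeSpectrum R :=
  PrimeSpectrum.comap (act g).toRingEquiv.toRingHom

/-- A subset of `X = Spec R` is `GL`-stable. -/
def GLStable (S : Set (PrimeSpectrum R)) : Prop :=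
  ∀ g ∈ GLSet K, pt K R act g ⁻¹' S = S

/-- The orbit closure `O̅ₓ`: the smallest closed `GL`-stable subset containing `x`. -/
def orbitClosure (x : PrimeSpectrum R) : Set (PrimeSpectrum R) :=
  ⋂₀ {Z | IsClosed Z ∧ GLStable K R act Z ∧ x ∈ Z}

/-- The generalized orbit `Oₓ` of a point. -/
def genOrbit (x : PrimeSpectrum R) : Set (PrimeSpectrum R) :=
  {y | orbitClosure K R act y = orbitClosure K R act x}

/-- `x` is a `GL`-fixed point of `X`. -/
def isFixedPt (x : PrimeSpectrum R) : Prop :=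
  ∀ g ∈ GLSet K, pt K R act g x = x

/-- The setoid whose classes are the generalized orbits. -/
def orbSetoid : Setoid (PrimeSpectrum R) :=
  ⟨fun x y => orbitClosure K R act x = orbitClosure K R act y,
    ⟨fun _ => rfl, Eq.symm, Eq.trans⟩⟩

/-- The orbit space `X^orb` with the quotient topology. -/
abbrev OrbSpace : Type := Quotient (orbSetoid K R act)

/-- The quotient map `π : X → X^orb`. -/
def orbMap (x : PrimeSpectrum R) : OrbSpace K R act :=
  Quotient.mk (orbSetoid K R act) x

end

section Aux

variable {K : Type} [Field K] {R : Type} [CommRing R] [Algebra K R]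
  {act : (Vec K ≃ₗ[K] Vec K) → (R ≃ₐ[K] R)}

lemma orbitClosure_isClosed (x : PrimeSpectrum R) :
    IsClosed (orbitClosure K R act x) :=
  isClosed_sInter fun _ h => h.1

lemma orbitClosure_stable (x : PrimeSpectrum R) :
    GLStable K R act (orbitClosure K R act x) := by
  intro g hg
  unfold orbitClosure
  rw [Set.preimage_sInter]
  ext z
  simp only [Set.mem_iInter, Set.mem_sInter, Set.mem_preimage]
  constructor
  · intro h Z hZ
    have := h Z hZ
    rwa [← hZ.2.1 g hg]
  · intro h Z hZ
    rw [← Set.mem_preimage, hZ.2.1 g hg]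
    exact h Z hZ

lemma mem_orbitClosure_self (x : PrimeSpectrum R) :
    x ∈ orbitClosure K R act x :=
  fun _ hZ => hZ.2.2

lemma orbitClosure_mono {x y : PrimeSpectrum R}
    (h : y ∈ orbitClosure K R act x) :
    orbitClosure K R act y ⊆ orbitClosure K R act x :=
  Set.sInter_subset_of_mem ⟨orbitClosure_isClosed x, orbitClosure_stable x, h⟩

lemma glstable_inter {A B : Set (PrimeSpectrum R)}
    (hA : GLStable K R act A) (hB : GLStable K R act B) :
    GLStable K R act (A ∩ B) := by
  intro g hg
  rw [Set.preimage_inter, hA g hg, hB g hg]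

lemma glstable_compl {A : Set (PrimeSpectrum R)}
    (hA : GLStable K R act A) :
    GLStable K R act Aᶜ := by
  intro g hg
  rw [Set.preimage_compl, hA g hg]

end Aux

/-- Let `X = Spec R` be an affine `GL`-scheme and `x ∈ X`.  The generalized orbit `Oₓ`
(the set of points with the same orbit closure as `x`) equals the intersection of all
non-empty open `GL`-stable subsets of the orbit closure `O̅ₓ`. -/
theorem genOrbit_eq_sInter_opens
    (K : Type) [Field K] [CharZero K]
    (R : Type) [CommRing R] [Algebra K R]
    (act : (Vec K ≃ₗ[K] Vec K) → (R ≃ₐ[K] R))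
    (halg : IsGLAlgebra K R act)
    (x : PrimeSpectrum R) :
    genOrbit K R act x =
      ⋂₀ {U : Set (PrimeSpectrum R) |
        U.Nonempty ∧ U ⊆ orbitClosure K R act x ∧ GLStable K R act U ∧
        ∃ V : Set (PrimeSpectrum R), IsOpen V ∧ U = V ∩ orbitClosure K R act x} := by
  ext y
  simp only [genOrbit, Set.mem_setOf_eq, Set.mem_sInter]
  constructor
  · -- forward direction
    rintro he U ⟨⟨u, hu⟩, hUsub, hUst, V, hV, hUV⟩
    by_contra hy
    -- the complement of U inside the orbit closure is closed and GL-stable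
    set C : Set (PrimeSpectrum R) := orbitClosure K R act x ∩ Uᶜ with hC
    have hCclosed : IsClosed C := by
      have : C = orbitClosure K R act x ∩ Vᶜ := by
        ext z
        simp only [hC, hUV, Set.mem_inter_iff, Set.mem_compl_iff]
        tauto
      rw [this]
      exact (orbitClosure_isClosed x).inter hV.isClosed_compl
    have hCst : GLStable K R act C :=
      glstable_inter (orbitClosure_stable x) (glstable_compl hUst)
    have hyC : y ∈ C := by
      refine ⟨?_, hy⟩
      rw [← he]; exact mem_orbitClosure_self y
    have hsub : orbitClosure K R act y ⊆ C :=
      Set.sInter_subset_of_mem ⟨hCclosed, hCst, hyC⟩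
    rw [he] at hsub
    exact (hsub (hUsub hu)).2 hu
  · -- reverse direction
    intro h
    have hyx : y ∈ orbitClosure K R act x :=
      h _ ⟨⟨x, mem_orbitClosure_self x⟩, subset_rfl, orbitClosure_stable x,
        Set.univ, isOpen_univ, (Set.univ_inter _).symm⟩
    refine subset_antisymm (orbitClosure_mono hyx) (orbitClosure_mono ?_)
    by_contra hx
    have hyU : y ∈ (orbitClosure K R act y)ᶜ ∩ orbitClosure K R act x :=
      h _ ⟨⟨x, hx, mem_orbitClosure_self x⟩, Set.inter_subset_right,
        glstable_inter (glstable_compl (orbitClosure_stable y)) (orbitClosure_stable x),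
        (orbitClosure K R act y)ᶜ, (orbitClosure_isClosed y).isOpen_compl, rfl⟩
    exact hyU.1 (mem_orbitClosure_self y)
end

section
/- Let X be an affine GL-scheme, let Z be a closed GL-stable subset of X, and U = X \ Z. Then U is GL-quasi-compact (every cover of U by open GL-stable subsets has a finite subcover) if and only if Z is the vanishing locus of an ideal of the coordinate ring generated by the GL-orbits of finitely many elements. -/
open TensorProduct PiTensorProduct

section AuxLemmas

variable {K : Type} [Field K]

lemma one_mem_GLSet : (1 : Vec K ≃ₗ[K] Vec K) ∈ GLSet K :=
  ⟨0, fun _ _ => ⟨rfl, rfl⟩, fun i h => absurd h (Nat.not_lt_zero i)⟩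

lemma inv_mem_GLSet {g : Vec K ≃ₗ[K] Vec K} (hg : g ∈ GLSet K) : g⁻¹ ∈ GLSet K := by
  obtain ⟨N, h1, h2⟩ := hg
  exact ⟨N, fun i hi => ⟨(h1 i hi).2, (h1 i hi).1⟩, fun i hi => ⟨(h2 i hi).2, (h2 i hi).1⟩⟩

lemma support_apply_subset {g : Vec K ≃ₗ[K] Vec K} {N : ℕ}
    (hg : ∀ j, j < N → ((g (ee K j)).support : Set ℕ) ⊆ Set.Iio N)
    {v : Vec K} (hv : (v.support : Set ℕ) ⊆ Set.Iio N) :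
    ((g v).support : Set ℕ) ⊆ Set.Iio N := by
  classical
  have hv2 : g v = v.sum fun j c => c • g (ee K j) := by
    conv_lhs => rw [show v = v.sum fun j c => c • ee K j by
      simp [ee, Finsupp.smul_single, Finsupp.sum_single]]
    rw [map_finsuppSum]
    simp
  intro k hk
  rw [hv2] at hk
  obtain ⟨j, hj, hkj⟩ := Finset.mem_biUnion.1 (Finsupp.support_sum hk)
  have hjN : j < N := hv hj
  exact hg j hjN (Finsupp.support_smul hkj)

lemma GLn_mono {N N' : ℕ} (h : N ≤ N') {g : Vec K ≃ₗ[K] Vec K} (hg : g ∈ GLn K N) :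
    g ∈ GLn K N' := by
  obtain ⟨h1, h2⟩ := hg
  have key : ∀ (f : Vec K →ₗ[K] Vec K), (∀ i, N ≤ i → f (ee K i) = ee K i) →
      (∀ i, i < N → ((f (ee K i)).support : Set ℕ) ⊆ Set.Iio N) →
      ∀ i, i < N' → ((f (ee K i)).support : Set ℕ) ⊆ Set.Iio N' := by
    intro f hf1 hf2 i hi
    by_cases hiN : i < N
    · exact (hf2 i hiN).trans (Set.Iio_subset_Iio h)
    · rw [hf1 i (not_lt.1 hiN)]
      intro k hk
      have : k = i := by
        simpa [ee, Finsupp.support_single_ne_zero i (one_ne_zero)] using hk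
      simpa [this] using hi
  refine ⟨fun i hi => h1 i (h.trans hi), fun i hi => ⟨?_, ?_⟩⟩
  · exact key g.toLinearMap (fun i hi => (h1 i hi).1) (fun i hi => (h2 i hi).1) i hi
  · exact key g.symm.toLinearMap (fun i hi => (h1 i hi).2) (fun i hi => (h2 i hi).2) i hi

lemma mul_mem_GLSet {g h : Vec K ≃ₗ[K] Vec K} (hg : g ∈ GLSet K) (hh : h ∈ GLSet K) :
    g * h ∈ GLSet K := by
  obtain ⟨N, hgN⟩ := hg
  obtain ⟨M, hhM⟩ := hh
  have hg' : g ∈ GLn K (max N M) := GLn_mono (le_max_left N M) hgN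
  have hh' : h ∈ GLn K (max N M) := GLn_mono (le_max_right N M) hhM
  set P := max N M
  refine ⟨P, fun i hi => ?_, fun i hi => ?_⟩
  · constructor
    · show g (h (ee K i)) = ee K i
      rw [(hh'.1 i hi).1, (hg'.1 i hi).1]
    · show h.symm (g.symm (ee K i)) = ee K i
      rw [(hg'.1 i hi).2, (hh'.1 i hi).2]
  · constructor
    · show (((g (h (ee K i)))).support : Set ℕ) ⊆ Set.Iio P
      exact support_apply_subset (fun j hj => (hg'.2 j hj).1) ((hh'.2 i hi).1)
    · show (((h.symm (g.symm (ee K i)))).support : Set ℕ) ⊆ Set.Iio P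
      exact support_apply_subset (fun j hj => (hh'.2 j hj).2) ((hg'.2 i hi).2)

variable (K) {R : Type} [CommRing R] [Algebra K R]
variable (act : (Vec K ≃ₗ[K] Vec K) → (R ≃ₐ[K] R))

lemma mem_pt_asIdeal (g : Vec K ≃ₗ[K] Vec K) (p : PrimeSpectrum R) (f : R) :
    f ∈ (pt K R act g p).asIdeal ↔ act g f ∈ p.asIdeal := by
  simp [pt, PrimeSpectrum.comap_asIdeal, Ideal.mem_comap]

lemma pt_preimage_basicOpen (g : Vec K ≃ₗ[K] Vec K) (r : R) :
    pt K R act g ⁻¹' (PrimeSpectrum.basicOpen r : Set (PrimeSpectrum R)) =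
      (PrimeSpectrum.basicOpen (act g r) : Set (PrimeSpectrum R)) := by
  ext p
  simp [PrimeSpectrum.mem_basicOpen, mem_pt_asIdeal]

end AuxLemmas

/-- Let `X = Spec R` be an affine `GL`-scheme, `Z ⊆ X` a closed `GL`-stable subset and
`U = X \ Z`.  Then `U` is `GL`-quasi-compact (every cover of `U` by open `GL`-stable
subsets has a finite subcover) if and only if `Z` is the vanishing locus of an ideal
generated by the `GL`-orbits of finitely many elements of `R`. -/
theorem GLquasiCompact_iff_finGLGenerated
    (K : Type) [Field K] [CharZero K]
    (R : Type) [CommRing R] [Algebra K R]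
    (act : (Vec K ≃ₗ[K] Vec K) → (R ≃ₐ[K] R))
    (halg : IsGLAlgebra K R act)
    (Z : Set (PrimeSpectrum R)) (hZcl : IsClosed Z) (hZst : GLStable K R act Z) :
    (∀ (ι : Type) (Us : ι → Set (PrimeSpectrum R)),
        (∀ i, IsOpen (Us i)) → (∀ i, GLStable K R act (Us i)) →
        Zᶜ ⊆ ⋃ i, Us i → ∃ s : Finset ι, Zᶜ ⊆ ⋃ i ∈ s, Us i) ↔
    (∃ fs : Finset R,
      Z = PrimeSpectrum.zeroLocus {r : R | ∃ f ∈ fs, ∃ g ∈ GLSet K, r = act g f}) := by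
  classical
  obtain ⟨hone, hmul, -⟩ := halg
  have hactone : ∀ f : R, act 1 f = f := by intro f; rw [hone]; rfl
  have hactmul : ∀ g ∈ GLSet K, ∀ h ∈ GLSet K, ∀ f : R,
      act (g * h) f = act g (act h f) := by
    intro g hg h hh f
    rw [hmul g hg h hh]; rfl
  constructor
  · intro hqc
    set I := PrimeSpectrum.vanishingIdeal Z with hI
    have hZeq : PrimeSpectrum.zeroLocus (I : Set R) = Z := by
      rw [hI, PrimeSpectrum.zeroLocus_vanishingIdeal_eq_closure, hZcl.closure_eq]
    set Us : I → Set (PrimeSpectrum R) :=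
      fun f => ⋃ g ∈ GLSet K, (PrimeSpectrum.basicOpen (act g f.1) : Set (PrimeSpectrum R))
      with hUs
    have hopen : ∀ f, IsOpen (Us f) :=
      fun f => isOpen_biUnion fun g _ => (PrimeSpectrum.basicOpen _).isOpen
    have hstable : ∀ f, GLStable K R act (Us f) := by
      intro f h hh
      rw [hUs]
      simp only [Set.preimage_iUnion, pt_preimage_basicOpen]
      ext p
      simp only [Set.mem_iUnion]
      constructor
      · rintro ⟨g, hg, hp⟩
        exact ⟨h * g, mul_mem_GLSet hh hg, by rwa [hactmul h hh g hg]⟩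
      · rintro ⟨g', hg', hp⟩
        refine ⟨h⁻¹ * g', mul_mem_GLSet (inv_mem_GLSet hh) hg', ?_⟩
        rwa [← hactmul h hh _ (mul_mem_GLSet (inv_mem_GLSet hh) hg'),
          mul_inv_cancel_left]
    have hcover : Zᶜ ⊆ ⋃ f, Us f := by
      intro p hp
      have hpz : p ∉ PrimeSpectrum.zeroLocus (I : Set R) := by rw [hZeq]; exact hp
      rw [PrimeSpectrum.mem_zeroLocus] at hpz
      obtain ⟨f, hfI, hfp⟩ := Set.not_subset.1 hpz
      refine Set.mem_iUnion.2 ⟨⟨f, hfI⟩, Set.mem_biUnion one_mem_GLSet ?_⟩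
      simpa [PrimeSpectrum.mem_basicOpen, hactone] using hfp
    obtain ⟨s, hs⟩ := hqc I Us hopen hstable hcover
    refine ⟨s.image Subtype.val, ?_⟩
    apply Set.Subset.antisymm
    · intro p hp
      rw [PrimeSpectrum.mem_zeroLocus]
      rintro r ⟨f, hf, g, hg, rfl⟩
      rw [SetLike.mem_coe, ← mem_pt_asIdeal]
      have hptZ : pt K R act g p ∈ Z := by
        have := hZst g hg
        rw [← this] at hp
        exact hp
      obtain ⟨a, _, rfl⟩ := Finset.mem_image.1 hf
      exact (PrimeSpectrum.mem_vanishingIdeal _ _).1 a.2 _ hptZ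
    · intro p hp
      by_contra hpZ
      have hmem := hs (show p ∈ Zᶜ from hpZ)
      obtain ⟨i, his, hpUs⟩ := Set.mem_iUnion₂.1 hmem
      obtain ⟨g, hg, hpD⟩ := Set.mem_iUnion₂.1 hpUs
      rw [PrimeSpectrum.mem_zeroLocus] at hp
      have h1 : (act g) i.1 ∈ p.asIdeal :=
        hp ⟨i.1, Finset.mem_image.2 ⟨i, his, rfl⟩, g, hg, rfl⟩
      have h2 : (act g) i.1 ∉ p.asIdeal := by
        simpa [PrimeSpectrum.mem_basicOpen] using hpD
      exact h2 h1
  · rintro ⟨fs, hfs⟩ ι Us hopen hstable hcover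
    have hsubset : ∀ f ∈ fs,
        (PrimeSpectrum.basicOpen f : Set (PrimeSpectrum R)) ⊆ Zᶜ := by
      intro f hf p hp hpZ
      rw [hfs, PrimeSpectrum.mem_zeroLocus] at hpZ
      have h1 : f ∈ p.asIdeal := hpZ ⟨f, hf, 1, one_mem_GLSet, (hactone f).symm⟩
      have h2 : f ∉ p.asIdeal := by simpa [PrimeSpectrum.mem_basicOpen] using hp
      exact h2 h1
    have hfin : ∀ f ∈ fs, ∃ t : Finset ι,
        (PrimeSpectrum.basicOpen f : Set (PrimeSpectrum R)) ⊆ ⋃ i ∈ t, Us i := by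
      intro f hf
      exact (PrimeSpectrum.isCompact_basicOpen f).elim_finite_subcover Us hopen
        ((hsubset f hf).trans hcover)
    choose! t ht using hfin
    refine ⟨fs.biUnion t, ?_⟩
    intro p hp
    rw [Set.mem_compl_iff, hfs, PrimeSpectrum.mem_zeroLocus] at hp
    obtain ⟨r, ⟨f, hf, g, hg, rfl⟩, hrp⟩ := Set.not_subset.1 hp
    have hpt : pt K R act g p ∈ (PrimeSpectrum.basicOpen f : Set (PrimeSpectrum R)) := by
      simpa [PrimeSpectrum.mem_basicOpen, mem_pt_asIdeal] using hrp
    obtain ⟨i, hit, hpUs⟩ := Set.mem_iUnion₂.1 (ht f hf hpt)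
    have hpi : p ∈ Us i := by
      have : p ∈ pt K R act g ⁻¹' Us i := hpUs
      rwa [hstable i g hg] at this
    exact Set.mem_iUnion₂.2 ⟨i, Finset.mem_biUnion.2 ⟨f, hf, hit⟩, hpi⟩
end

section
/- Let K be a field of characteristic 0, let d ≥ 1, and let T_d = V^{⊗d} where V = ⋃_n K^n is the standard GL-representation with basis (e_i)_{i≥1}. Fix an injective function f : {1,...,d} × ℕ → ℕ and let v ∈ T_d^* be the linear functional v = Σ_{n≥0} e*_{f(1,n)} ⊗ ... ⊗ e*_{f(d,n)} (dual to the indicated basis tensors). Then for every n, the orbit closure of v in Spec(Sym(T_d)) under GL contains the dual space T_{d,≤n}^* of the span of all basis tensors e_{i_1} ⊗ ... ⊗ e_{i_d} with all i_j ≤ n; consequently v is GL-generic, i.e. its orbit closure is all of Spec(Sym(T_d)). -/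
open TensorProduct PiTensorProduct
open scoped Classical

noncomputable section

variable (K : Type) [Field K] {d : ℕ}

/-- The basis tensor `e_{m 0} ⊗ ⋯ ⊗ e_{m (d-1)}` of `T_d = 𝐕^{⊗d}`. -/
def tp (m : Fin d → ℕ) : ⨂[K] (_j : Fin d), Vec K :=
  PiTensorProduct.tprod K (fun j => ee K (m j))

/-- The action of `g ∈ GL` on a `K`-point of `Spec Sym(T_d)`, i.e. on a linear
functional on `T_d = 𝐕^{⊗d}`, by precomposition with `g^{⊗d}`. -/
def dAct (g : Vec K ≃ₗ[K] Vec K)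
    (φ : Module.Dual K (⨂[K] (_j : Fin d), Vec K)) :
    Module.Dual K (⨂[K] (_j : Fin d), Vec K) :=
  φ ∘ₗ PiTensorProduct.map (fun _ : Fin d => g.toLinearMap)

end

noncomputable section

variable (K : Type) [Field K] {d : ℕ}

-- expansion lemma
theorem expand_lemma (φ : Module.Dual K (⨂[K] (_j : Fin d), Vec K))
    (x : Fin d → Vec K) (F : Finset ℕ) (hx : ∀ j, (x j).support ⊆ F) :
    φ (PiTensorProduct.tprod K x)
      = ∑ r ∈ Fintype.piFinset (fun _ : Fin d => F),
          (∏ j, x j (r j)) * φ (tp K r) := by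
  have hx' : ∀ j, x j = ∑ k ∈ F, (x j k) • ee K k := by
    intro j
    ext a
    rw [Finsupp.finset_sum_apply]
    simp only [Finsupp.smul_apply, ee, Finsupp.single_apply, smul_eq_mul]
    by_cases ha : a ∈ F
    · rw [Finset.sum_eq_single a]
      · simp
      · intro b _ hb; simp [hb]
      · intro h; exact absurd ha h
    · have : a ∉ (x j).support := fun h => ha (hx j h)
      rw [Finsupp.notMem_support_iff] at this
      rw [this, Finset.sum_eq_zero]
      intro b hb
      have hba : b ≠ a := by rintro rfl; exact ha hb
      simp [hba]
  have key := (φ.compMultilinearMap (PiTensorProduct.tprod K)).map_sum_finset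
    (fun (j : Fin d) (k : ℕ) => (x j k) • ee K k) (fun _ => F)
  have hxx : x = fun j => ∑ k ∈ F, (x j k) • ee K k := funext hx'
  calc φ (PiTensorProduct.tprod K x)
      = (φ.compMultilinearMap (PiTensorProduct.tprod K))
          (fun j => ∑ k ∈ F, (x j k) • ee K k) := by
        conv_lhs => rw [hxx]
        rfl
    _ = ∑ r ∈ Fintype.piFinset (fun _ : Fin d => F),
          (φ.compMultilinearMap (PiTensorProduct.tprod K))
            (fun j => (x j (r j)) • ee K (r j)) := key
    _ = _ := by
        apply Finset.sum_congr rfl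
        intro r _
        rw [MultilinearMap.map_smul_univ]
        simp [tp, smul_eq_mul]

-- block endomorphism
def colVec (N : ℕ) (M : Matrix (Fin N) (Fin N) K) (i : Fin N) : Vec K :=
  ∑ k : Fin N, M k i • ee K (k : ℕ)

def tv (N : ℕ) (M : Matrix (Fin N) (Fin N) K) (i : ℕ) : Vec K :=
  if h : i < N then colVec K N M ⟨i, h⟩ else ee K i

def toEnd (N : ℕ) (M : Matrix (Fin N) (Fin N) K) : Vec K →ₗ[K] Vec K :=
  Finsupp.lsum K (fun i => LinearMap.toSpanSingleton K (Vec K) (tv K N M i))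

theorem toEnd_single (N : ℕ) (M : Matrix (Fin N) (Fin N) K) (i : ℕ) (b : K) :
    toEnd K N M (Finsupp.single i b) = b • tv K N M i := by
  rw [toEnd, Finsupp.lsum_single]; rfl

theorem toEnd_ee (N : ℕ) (M : Matrix (Fin N) (Fin N) K) (i : ℕ) :
    toEnd K N M (ee K i) = tv K N M i := by
  rw [ee, toEnd_single, one_smul]

theorem colVec_apply (N : ℕ) (M : Matrix (Fin N) (Fin N) K) (i : Fin N) (k : ℕ) :
    colVec K N M i k = if h : k < N then M ⟨k, h⟩ i else 0 := by
  rw [colVec, Finsupp.finset_sum_apply]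
  simp only [Finsupp.smul_apply, ee, Finsupp.single_apply, smul_eq_mul]
  by_cases h : k < N
  · rw [dif_pos h, Finset.sum_eq_single (⟨k, h⟩ : Fin N)]
    · simp
    · intro l _ hl
      have : (l : ℕ) ≠ k := by
        intro he; exact hl (Fin.ext he)
      simp [this]
    · simp
  · rw [dif_neg h, Finset.sum_eq_zero]
    intro l _
    have : (l : ℕ) ≠ k := by intro he; exact h (he ▸ l.isLt)
    simp [this]

theorem colVec_support (N : ℕ) (M : Matrix (Fin N) (Fin N) K) (i : Fin N) :
    ((colVec K N M i).support : Set ℕ) ⊆ Set.Iio N := by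
  intro k hk
  simp only [Finset.coe_sort_coe, Finset.mem_coe, Finsupp.mem_support_iff] at hk
  by_contra hkN
  rw [Set.mem_Iio, not_lt] at hkN
  exact hk (by rw [colVec_apply, dif_neg (not_lt.mpr hkN)])

theorem toEnd_comp (N : ℕ) (M M' : Matrix (Fin N) (Fin N) K) :
    (toEnd K N M) ∘ₗ (toEnd K N M') = toEnd K N (M * M') := by
  apply Finsupp.lhom_ext
  intro i b
  simp only [LinearMap.comp_apply, toEnd_single, map_smul]
  congr 1
  by_cases h : i < N
  · rw [tv, dif_pos h, tv, dif_pos h, colVec, map_sum]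
    simp only [map_smul, toEnd_ee]
    have htv : ∀ x : Fin N, tv K N M (x : ℕ) = colVec K N M x := by
      intro x; rw [tv, dif_pos x.isLt]
    simp only [htv, colVec, Finset.smul_sum, smul_smul]
    rw [Finset.sum_comm]
    apply Finset.sum_congr rfl
    intro l _
    rw [Matrix.mul_apply, Finset.sum_smul]
    apply Finset.sum_congr rfl
    intro k _
    rw [mul_comm]
  · rw [tv, dif_neg h, toEnd_ee, tv, dif_neg h, tv, dif_neg h]

theorem toEnd_one (N : ℕ) : toEnd K N (1 : Matrix (Fin N) (Fin N) K) = LinearMap.id := by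
  apply Finsupp.lhom_ext
  intro i b
  rw [toEnd_single, LinearMap.id_apply]
  by_cases h : i < N
  · rw [tv, dif_pos h]
    have : colVec K N (1 : Matrix (Fin N) (Fin N) K) ⟨i, h⟩ = ee K i := by
      ext k
      rw [colVec_apply]
      by_cases hk : k < N
      · rw [dif_pos hk]
        simp only [Matrix.one_apply, ee, Finsupp.single_apply]
        by_cases he : i = k
        · subst he; simp
        · have he' : ¬ k = i := fun hc => he hc.symm
          have hne : (⟨k, hk⟩ : Fin N) ≠ ⟨i, h⟩ := Fin.ne_of_val_ne he'
          simp [Matrix.one_apply_ne hne, he, he']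
      · rw [dif_neg hk]
        have : i ≠ k := by rintro rfl; exact hk h
        simp [ee, Finsupp.single_apply, this]
    rw [this, ee]
    simp [Finsupp.smul_single]
  · rw [tv, dif_neg h, ee]
    simp [Finsupp.smul_single]

def toEquiv (N : ℕ) (M M' : Matrix (Fin N) (Fin N) K)
    (h1 : M * M' = 1) (h2 : M' * M = 1) : Vec K ≃ₗ[K] Vec K :=
  LinearEquiv.ofLinear (toEnd K N M) (toEnd K N M')
    (by rw [toEnd_comp, h1, toEnd_one]) (by rw [toEnd_comp, h2, toEnd_one])

theorem toEquiv_apply (N : ℕ) (M M' : Matrix (Fin N) (Fin N) K) (h1 h2) (x : Vec K) :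
    toEquiv K N M M' h1 h2 x = toEnd K N M x := rfl

theorem toEquiv_symm_apply (N : ℕ) (M M' : Matrix (Fin N) (Fin N) K) (h1 h2) (x : Vec K) :
    (toEquiv K N M M' h1 h2).symm x = toEnd K N M' x := rfl

theorem toEquiv_mem (N : ℕ) (M M' : Matrix (Fin N) (Fin N) K) (h1 h2) :
    toEquiv K N M M' h1 h2 ∈ GLSet K := by
  refine ⟨N, fun i hi => ?_, fun i hi => ?_⟩
  · rw [toEquiv_apply, toEquiv_symm_apply, toEnd_ee, toEnd_ee, tv, tv,
      dif_neg (not_lt.mpr hi), dif_neg (not_lt.mpr hi)]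
    exact ⟨rfl, rfl⟩
  · rw [toEquiv_apply, toEquiv_symm_apply, toEnd_ee, toEnd_ee, tv, tv,
      dif_pos hi, dif_pos hi]
    exact ⟨colVec_support K N M _, colVec_support K N M' _⟩

theorem eval_aeval {σ : Type*} (q : σ → Polynomial K) (h : MvPolynomial σ K) (t : K) :
    Polynomial.eval t (MvPolynomial.aeval q h)
      = MvPolynomial.eval (fun m => Polynomial.eval t (q m)) h := by
  induction h using MvPolynomial.induction_on with
  | C a => simp [MvPolynomial.algebraMap_eq]
  | add p q' hp hq => simp [hp, hq]
  | mul_X p i hp => simp [hp]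

end

theorem parta
    (K : Type) [Field K] [CharZero K] (d : ℕ) (hd : 1 ≤ d)
    (f : Fin d × ℕ → ℕ) (hf : Function.Injective f)
    (v : Module.Dual K (⨂[K] (_j : Fin d), Vec K))
    (hv : ∀ m : Fin d → ℕ,
      v (tp K m) = if ∃ n : ℕ, ∀ j : Fin d, m j = f (j, n) then (1 : K) else 0)
    (n : ℕ) (w : Module.Dual K (⨂[K] (_j : Fin d), Vec K))
    (hw : ∀ m : Fin d → ℕ, ¬ (∀ j, m j < n) → w (tp K m) = 0)
    (h : MvPolynomial (Fin d → ℕ) K)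
    (hh : ∀ g ∈ GLSet K, MvPolynomial.eval (fun m => dAct K g v (tp K m)) h = 0) :
    MvPolynomial.eval (fun m => w (tp K m)) h = 0 := by
  classical
  obtain ⟨enc, henc⟩ : ∃ enc : (Fin d → ℕ) → ℕ, Function.Injective enc :=
    Countable.exists_injective_nat _
  set S : Finset (Fin d → ℕ) := h.vars with hS
  set j0 : Fin d := ⟨0, hd⟩ with hj0
  set Pn : Finset (Fin d → ℕ) := Fintype.piFinset (fun _ => Finset.range n) with hPn
  set wt : (Fin d → ℕ) → Fin d → K := fun p j => if j = j0 then w (tp K p) else 1 with hwt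
  set c : ℕ → ℕ → K := fun k i =>
    ∑ p ∈ Pn, ∑ j : Fin d, (if k = f (j, enc p) ∧ i = p j then wt p j else 0) with hc
  set N : ℕ := n + S.sup (fun m => Finset.univ.sup m)
      + Pn.sup (fun p => Finset.univ.sup (fun j => f (j, enc p))) + 1 with hN
  have hnN : n < N := by omega
  have hSN : ∀ m ∈ S, ∀ j, m j < N := by
    intro m hm j
    have h1 : m j ≤ Finset.univ.sup m := Finset.le_sup (Finset.mem_univ j)
    have h2 : Finset.univ.sup m ≤ S.sup (fun m => Finset.univ.sup m) := Finset.le_sup hm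
    omega
  have hfN : ∀ p ∈ Pn, ∀ j, f (j, enc p) < N := by
    intro p hp j
    have h1 : f (j, enc p) ≤ Finset.univ.sup (fun j => f (j, enc p)) :=
      Finset.le_sup (f := fun j => f (j, enc p)) (Finset.mem_univ j)
    have h2 : Finset.univ.sup (fun j => f (j, enc p))
        ≤ Pn.sup (fun p => Finset.univ.sup (fun j => f (j, enc p))) :=
      Finset.le_sup (f := fun p => Finset.univ.sup (fun j => f (j, enc p))) hp
    omega
  set Mt : Matrix (Fin N) (Fin N) (Polynomial K) := fun k i =>
    (1 - Polynomial.X) * (if k = i then 1 else 0)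
      + Polynomial.X * Polynomial.C (c (k : ℕ) (i : ℕ)) with hMt
  set cpoly : ℕ → ℕ → Polynomial K := fun i k =>
    if hi : i < N then (if hk : k < N then Mt ⟨k, hk⟩ ⟨i, hi⟩ else 0)
    else (if k = i then 1 else 0) with hcpoly
  set Fm : (Fin d → ℕ) → Finset ℕ :=
    fun m => Finset.range N ∪ Finset.image m Finset.univ with hFm
  set q : (Fin d → ℕ) → Polynomial K := fun m =>
    ∑ r ∈ Fintype.piFinset (fun _ : Fin d => Fm m),
      (∏ j, cpoly (m j) (r j)) * Polynomial.C (v (tp K r)) with hq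
  set P : Polynomial K := MvPolynomial.aeval q h with hP
  -- Step 1 : vanishing at points where the matrix is invertible
  have step1 : ∀ t : K, Polynomial.eval t Mt.det ≠ 0 → Polynomial.eval t P = 0 := by
    intro t hdet
    set Mtt : Matrix (Fin N) (Fin N) K := Mt.map (Polynomial.eval t) with hMtt
    have hdet' : IsUnit Mtt.det := by
      have hh1 : Mtt.det = Polynomial.eval t Mt.det :=
        (RingHom.map_det (Polynomial.evalRingHom t) Mt).symm
      rw [hh1]
      exact isUnit_iff_ne_zero.mpr hdet
    have h1 : Mtt * Mtt⁻¹ = 1 := Matrix.mul_nonsing_inv _ hdet'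
    have h2 : Mtt⁻¹ * Mtt = 1 := Matrix.nonsing_inv_mul _ hdet'
    set g : Vec K ≃ₗ[K] Vec K := toEquiv K N Mtt Mtt⁻¹ h1 h2 with hg
    have hgmem : g ∈ GLSet K := toEquiv_mem K N Mtt Mtt⁻¹ h1 h2
    have hzero := hh g hgmem
    have hqm : ∀ m : Fin d → ℕ, Polynomial.eval t (q m) = dAct K g v (tp K m) := by
      intro m
      have hact : dAct K g v (tp K m)
          = v (PiTensorProduct.tprod K (fun j => toEnd K N Mtt (ee K (m j)))) := by
        rw [dAct, LinearMap.comp_apply, tp, PiTensorProduct.map_tprod]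
        rfl
      have hsupp : ∀ j, ((toEnd K N Mtt (ee K (m j))).support : Finset ℕ) ⊆ Fm m := by
        intro j k hk
        rw [toEnd_ee, tv] at hk
        by_cases hmj : m j < N
        · rw [dif_pos hmj] at hk
          apply Finset.mem_union_left
          rw [Finset.mem_range]
          by_contra hkN
          rw [Finsupp.mem_support_iff] at hk
          exact hk (by rw [colVec_apply, dif_neg hkN])
        · rw [dif_neg hmj] at hk
          have := Finsupp.support_single_subset hk
          rw [Finset.mem_singleton] at this
          subst this
          exact Finset.mem_union_right _ (Finset.mem_image.mpr ⟨j, Finset.mem_univ j, rfl⟩)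
      rw [hact, expand_lemma K v _ (Fm m) hsupp]
      simp only [hq]
      rw [Polynomial.eval_finset_sum]
      apply Finset.sum_congr rfl
      intro r _
      rw [Polynomial.eval_mul, Polynomial.eval_C]
      congr 1
      rw [Polynomial.eval_prod]
      apply Finset.prod_congr rfl
      intro j _
      rw [toEnd_ee, tv]
      simp only [hcpoly]
      by_cases hmj : m j < N
      · rw [dif_pos hmj, dif_pos hmj, colVec_apply]
        by_cases hrj : r j < N
        · rw [dif_pos hrj, dif_pos hrj]
          rfl
        · rw [dif_neg hrj, dif_neg hrj, Polynomial.eval_zero]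
      · rw [dif_neg hmj, dif_neg hmj, ee, Finsupp.single_apply]
        by_cases he : m j = r j
        · rw [if_pos he, if_pos he.symm, Polynomial.eval_one]
        · rw [if_neg he, if_neg (fun hx => he hx.symm), Polynomial.eval_zero]
    calc Polynomial.eval t P
        = MvPolynomial.eval (fun m => Polynomial.eval t (q m)) h := eval_aeval K q h t
      _ = MvPolynomial.eval (fun m => dAct K g v (tp K m)) h := by
          rw [funext hqm]
      _ = 0 := hzero
  -- Step 2 : P = 0
  have hMtdet : Mt.det ≠ 0 := by
    intro h0
    have hmap : Mt.map (Polynomial.evalRingHom 0) = 1 := by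
      ext k i
      rw [Matrix.map_apply, hMt]
      simp only [Matrix.one_apply]
      split_ifs <;> simp
    have heval0 : Polynomial.eval 0 Mt.det = 1 := by
      have hh2 := RingHom.map_det (Polynomial.evalRingHom 0) Mt
      rw [show (Polynomial.evalRingHom (0:K)).mapMatrix Mt = Mt.map (Polynomial.evalRingHom 0) from rfl,
        hmap, Matrix.det_one] at hh2
      exact hh2
    rw [h0] at heval0
    simp at heval0
  have hP0 : P = 0 := by
    apply Polynomial.eq_zero_of_infinite_isRoot
    have hfin : {t : K | Polynomial.IsRoot Mt.det t}.Finite :=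
      Polynomial.finite_setOf_isRoot hMtdet
    have hinf : {t : K | Polynomial.IsRoot Mt.det t}ᶜ.Infinite := hfin.infinite_compl
    apply hinf.mono
    intro t ht
    exact step1 t ht
  have h1P : MvPolynomial.eval (fun m => Polynomial.eval 1 (q m)) h = 0 := by
    rw [← eval_aeval K q h 1, ← hP, hP0, Polynomial.eval_zero]
  -- Step 3 : matching at t = 1 on the variables of h
  have hmatch : ∀ m ∈ h.vars, Polynomial.eval 1 (q m) = w (tp K m) := by
    intro m hm
    have hmN : ∀ j, m j < N := hSN m hm
    have hFmr : Fm m = Finset.range N := by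
      apply Finset.union_eq_left.mpr
      intro k hk
      obtain ⟨j, _, rfl⟩ := Finset.mem_image.mp hk
      exact Finset.mem_range.mpr (hmN j)
    have e1 : Polynomial.eval 1 (q m)
        = ∑ r ∈ Fintype.piFinset (fun _ : Fin d => Finset.range N),
            (∏ j, c (r j) (m j)) * v (tp K r) := by
      simp only [hq, hFmr]
      rw [Polynomial.eval_finset_sum]
      apply Finset.sum_congr rfl
      intro r hr
      have hrN : ∀ j, r j < N := by
        intro j
        have := Fintype.mem_piFinset.mp hr j
        exact Finset.mem_range.mp this
      rw [Polynomial.eval_mul, Polynomial.eval_C]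
      congr 1
      rw [Polynomial.eval_prod]
      apply Finset.prod_congr rfl
      intro j _
      simp only [hcpoly]
      rw [dif_pos (hmN j), dif_pos (hrN j)]
      simp only [hMt]
      split_ifs <;> simp
    by_cases hcase : ∀ j, m j < n
    · -- main case
      have hm_Pn : m ∈ Pn :=
        Fintype.mem_piFinset.mpr (fun j => Finset.mem_range.mpr (hcase j))
      have hcf : ∀ p ∈ Pn, ∀ (j : Fin d) (i : ℕ),
          c (f (j, enc p)) i = if i = p j then wt p j else 0 := by
        intro p hp j i
        simp only [hc]
        rw [Finset.sum_eq_single_of_mem p hp]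
        · rw [Finset.sum_eq_single_of_mem j (Finset.mem_univ j)]
          · simp
          · intro j' _ hj'
            rw [if_neg]
            rintro ⟨h1, -⟩
            exact hj' (congrArg Prod.fst (hf h1)).symm
        · intro p' hp' hpp'
          apply Finset.sum_eq_zero
          intro j' _
          rw [if_neg]
          rintro ⟨h1, -⟩
          exact hpp' (henc (congrArg Prod.snd (hf h1))).symm
      set ρ : (Fin d → ℕ) → (Fin d → ℕ) := fun p j => f (j, enc p) with hρ
      have hρinj : ∀ p ∈ Pn, ∀ p' ∈ Pn, ρ p = ρ p' → p = p' := by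
        intro p _ p' _ hpe
        exact henc (congrArg Prod.snd (hf (congrFun hpe j0)))
      have himg : Finset.image ρ Pn ⊆ Fintype.piFinset (fun _ : Fin d => Finset.range N) := by
        intro r hr
        obtain ⟨p, hp, rfl⟩ := Finset.mem_image.mp hr
        exact Fintype.mem_piFinset.mpr (fun j => Finset.mem_range.mpr (hfN p hp j))
      have hvanish : ∀ r ∈ Fintype.piFinset (fun _ : Fin d => Finset.range N),
          r ∉ Finset.image ρ Pn → (∏ j, c (r j) (m j)) * v (tp K r) = 0 := by
        intro r _ hrim
        by_contra hT
        have hvr : v (tp K r) ≠ 0 := fun h0 => hT (by rw [h0, mul_zero])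
        have hprod : ∀ j, c (r j) (m j) ≠ 0 := by
          intro j hj0'
          exact hT (by rw [Finset.prod_eq_zero (Finset.mem_univ j) hj0', zero_mul])
        have hex : ∃ N', ∀ j, r j = f (j, N') := by
          by_contra hco
          rw [hv, if_neg hco] at hvr
          exact hvr rfl
        obtain ⟨N', hN'⟩ := hex
        have hcj0 := hprod j0
        simp only [hc] at hcj0
        obtain ⟨p, hp, hps⟩ := Finset.exists_ne_zero_of_sum_ne_zero hcj0
        obtain ⟨j', _, hps'⟩ := Finset.exists_ne_zero_of_sum_ne_zero hps
        have hcond : r j0 = f (j', enc p) ∧ m j0 = p j' := by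
          by_contra hco
          rw [if_neg hco] at hps'
          exact hps' rfl
        have hpair : (j0, N') = (j', enc p) := hf ((hN' j0).symm.trans hcond.1)
        have hNenc : N' = enc p := congrArg Prod.snd hpair
        apply hrim
        apply Finset.mem_image.mpr ⟨p, hp, ?_⟩
        funext j
        simp only [hρ]
        rw [← hNenc, ← hN' j]
      rw [e1, ← Finset.sum_subset himg hvanish,
        Finset.sum_image (fun p hp p' hp' => hρinj p hp p' hp')]
      have hv1 : v (tp K (ρ m)) = 1 := by
        rw [hv, if_pos ⟨enc m, fun j => rfl⟩]
      rw [Finset.sum_eq_single_of_mem m hm_Pn]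
      · rw [hv1, mul_one]
        have hterm : ∀ j : Fin d, c (ρ m j) (m j) = wt m j := by
          intro j
          simp only [hρ]
          rw [hcf m hm_Pn j, if_pos rfl]
        rw [Finset.prod_congr rfl (fun j _ => hterm j)]
        simp only [hwt]
        rw [Finset.prod_ite_eq' Finset.univ j0 (fun _ => w (tp K m))]
        rw [if_pos (Finset.mem_univ j0)]
      · intro p hp hpm
        obtain ⟨j, hj⟩ := Function.ne_iff.mp hpm
        apply mul_eq_zero_of_left
        apply Finset.prod_eq_zero (Finset.mem_univ j)
        simp only [hρ]
        rw [hcf p hp j, if_neg]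
        intro he
        exact hj he.symm

    · -- degenerate case
      obtain ⟨j1, hj1⟩ := not_forall.mp hcase
      rw [e1, hw m hcase]
      apply Finset.sum_eq_zero
      intro r _
      apply mul_eq_zero_of_left
      apply Finset.prod_eq_zero (Finset.mem_univ j1)
      simp only [hc]
      apply Finset.sum_eq_zero
      intro p hp
      apply Finset.sum_eq_zero
      intro j _
      rw [if_neg]
      rintro ⟨-, h2⟩
      have hpj : p j < n := Finset.mem_range.mp (Fintype.mem_piFinset.mp hp j)
      exact hj1 (h2 ▸ hpj)
  calc MvPolynomial.eval (fun m => w (tp K m)) h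
      = MvPolynomial.eval (fun m => Polynomial.eval 1 (q m)) h := by
        apply MvPolynomial.eval₂Hom_congr' rfl ?_ rfl
        intro i hi _
        exact (hmatch i hi).symm
    _ = 0 := h1P

theorem partb
    (K : Type) [Field K] [CharZero K] (d : ℕ) (hd : 1 ≤ d)
    (f : Fin d × ℕ → ℕ) (hf : Function.Injective f)
    (v : Module.Dual K (⨂[K] (_j : Fin d), Vec K))
    (hv : ∀ m : Fin d → ℕ,
      v (tp K m) = if ∃ n : ℕ, ∀ j : Fin d, m j = f (j, n) then (1 : K) else 0)
    (h : MvPolynomial (Fin d → ℕ) K)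
    (hh : ∀ g ∈ GLSet K, MvPolynomial.eval (fun m => dAct K g v (tp K m)) h = 0) :
    h = 0 := by
  classical
  refine MvPolynomial.funext fun x => ?_
  rw [map_zero]
  set S : Finset (Fin d → ℕ) := h.vars with hS
  set Φ : MultilinearMap K (fun _ : Fin d => Vec K) K :=
    ∑ m ∈ S, x m • (MultilinearMap.mkPiAlgebra K (Fin d) K).compLinearMap
      (fun j => Finsupp.lapply (m j)) with hΦ
  set w : Module.Dual K (⨂[K] (_j : Fin d), Vec K) := PiTensorProduct.lift Φ with hwdef
  have hwtp : ∀ m' : Fin d → ℕ, w (tp K m') = if m' ∈ S then x m' else 0 := by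
    intro m'
    rw [hwdef, tp, PiTensorProduct.lift.tprod, hΦ, MultilinearMap.sum_apply]
    simp only [MultilinearMap.smul_apply, MultilinearMap.compLinearMap_apply,
      MultilinearMap.mkPiAlgebra_apply, Finsupp.lapply_apply, smul_eq_mul]
    by_cases hm' : m' ∈ S
    · rw [Finset.sum_eq_single_of_mem m' hm', if_pos hm']
      · simp [ee, Finsupp.single_apply]
      · intro p _ hpm
        obtain ⟨j, hj⟩ := Function.ne_iff.mp hpm
        apply mul_eq_zero_of_right
        apply Finset.prod_eq_zero (Finset.mem_univ j)
        have hne : ¬ m' j = p j := fun hc => hj hc.symm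
        simp [ee, Finsupp.single_apply, hne]
    · rw [if_neg hm']
      apply Finset.sum_eq_zero
      intro p hp
      have hpm : p ≠ m' := fun he => hm' (he ▸ hp)
      obtain ⟨j, hj⟩ := Function.ne_iff.mp hpm
      apply mul_eq_zero_of_right
      apply Finset.prod_eq_zero (Finset.mem_univ j)
      have hne : ¬ m' j = p j := fun hc => hj hc.symm
      simp [ee, Finsupp.single_apply, hne]
  set n : ℕ := S.sup (fun m => Finset.univ.sup m) + 1 with hn
  have hwv : ∀ m : Fin d → ℕ, ¬(∀ j, m j < n) → w (tp K m) = 0 := by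
    intro m hm
    rw [hwtp, if_neg]
    intro hmS
    apply hm
    intro j
    have h1 : m j ≤ Finset.univ.sup m := Finset.le_sup (Finset.mem_univ j)
    have h2 : Finset.univ.sup m ≤ S.sup (fun m => Finset.univ.sup m) := Finset.le_sup hmS
    omega
  have h0 := parta K d hd f hf v hv n w hwv h hh
  have hcong : MvPolynomial.eval x h = MvPolynomial.eval (fun m => w (tp K m)) h := by
    apply MvPolynomial.eval₂Hom_congr' rfl ?_ rfl
    intro i hi _
    rw [hwtp, if_pos hi]
  rw [hcong, h0]


/-- Let `T_d = 𝐕^{⊗d}` (`d ≥ 1`) over a field `K` of characteristic `0`, let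
`f : Fin d × ℕ → ℕ` be injective, and let `v ∈ T_d^*` be the functional
`v = ∑ₙ e*_{f(0,n)} ⊗ ⋯ ⊗ e*_{f(d-1,n)}`.  Then: (a) for every `n`, every functional
`w ∈ T_{d,≤n}^*` (i.e. vanishing on all basis tensors with some index `≥ n`) lies in
the `GL`-orbit closure of `v` in `Spec Sym(T_d)` — every polynomial vanishing on the
orbit `GL·v` vanishes at `w`; and (b) `v` is `GL`-generic: the only polynomial
vanishing on `GL·v` is `0`, so the orbit closure of `v` is all of `Spec Sym(T_d)`. -/
theorem tensor_generic_orbitClosure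
    (K : Type) [Field K] [CharZero K] (d : ℕ) (hd : 1 ≤ d)
    (f : Fin d × ℕ → ℕ) (hf : Function.Injective f)
    (v : Module.Dual K (⨂[K] (_j : Fin d), Vec K))
    (hv : ∀ m : Fin d → ℕ,
      v (tp K m) = if ∃ n : ℕ, ∀ j : Fin d, m j = f (j, n) then (1 : K) else 0) :
    (∀ (n : ℕ) (w : Module.Dual K (⨂[K] (_j : Fin d), Vec K)),
      (∀ m : Fin d → ℕ, ¬ (∀ j, m j < n) → w (tp K m) = 0) →
      ∀ h : MvPolynomial (Fin d → ℕ) K,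
        (∀ g ∈ GLSet K, MvPolynomial.eval (fun m => dAct K g v (tp K m)) h = 0) →
        MvPolynomial.eval (fun m => w (tp K m)) h = 0) ∧
    (∀ h : MvPolynomial (Fin d → ℕ) K,
      (∀ g ∈ GLSet K, MvPolynomial.eval (fun m => dAct K g v (tp K m)) h = 0) →
      h = 0) :=
  ⟨fun n w hw h hh => parta K d hd f hf v hv n w hw h hh,
   fun h hh => partb K d hd f hf v hv h hh⟩
end

section
/- Let K = ℂ((t)), let 𝓡 be the inverse limit of the graded polynomial rings K[x_1,...,x_n] (so 𝓡_d consists of possibly-infinite K-linear combinations of degree-d monomials in x_1, x_2, ...), and let 𝓡^♭ ⊆ 𝓡 be the subring of elements all of whose coefficients lie in t^{-n}ℂ[[t]] for some n. Suppose f ∈ 𝓡^♭_d is homogeneous and can be written f = Σ_{i=1}^r g_i h_i with g_i, h_i ∈ 𝓡 homogeneous of positive degree < d, and suppose moreover that f = Σ_{i=1}^r g'_i h'_i with g'_i, h'_i homogeneous of positive degrees, defined over K(t^{1/n}), and bounded (coefficients in t^{-m}ℂ[[t^{1/n}]] for some m). Then f has strength at most r·n in 𝓡^♭: f = Σ_{j=1}^{rn}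 a_j b_j with a_j, b_j ∈ 𝓡^♭ homogeneous of positive degree < d. -/
noncomputable section

/-- The base field `K = ℂ((t))`. -/
abbrev KK : Type := LaurentSeries ℂ

/-- A (possibly infinite) formal linear combination of monomials in `x_1, x_2, …` with
coefficients in `K = ℂ((t))`: an element of a graded piece of the inverse limit `𝓡` of
the polynomial rings `K[x_1, …, x_n]`. -/
abbrev El : Type := (ℕ →₀ ℕ) → KK

/-- The total degree of a monomial. -/
def mdeg (m : ℕ →₀ ℕ) : ℕ := m.sum fun _ k => k

/-- `f` is homogeneous of degree `d`. -/
def Homog (d : ℕ) (f : El) : Prop := ∀ m, mdeg m ≠ d → f m = 0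

/-- Multiplication in `𝓡` (convolution of coefficient functions). -/
def conv (f g : El) : El := fun m => ∑ p ∈ Finset.HasAntidiagonal.antidiagonal m, f p.1 * g p.2

/-- `f` lies in `𝓡^♭`: all coefficients lie in `t^{-N} ℂ[[t]]` for some `N`
(bounded denominators). -/
def Bdd (f : El) : Prop :=
  ∃ N : ℕ, ∀ (m : ℕ →₀ ℕ) (k : ℤ), k < -(N : ℤ) → (f m).coeff k = 0

/-- The substitution `t ↦ uⁿ`, embedding `ℂ((t))` into `ℂ((u))` with `u = t^{1/n}`. -/
def subst (n : ℕ) (hn : 1 ≤ n) : KK → KK :=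
  HahnSeries.embDomain
    (OrderEmbedding.ofStrictMono (fun k : ℤ => (n : ℤ) * k)
      (fun a b hab => by
        have hn' : (0 : ℤ) < (n : ℤ) := by exact_mod_cast hn
        exact mul_lt_mul_of_pos_left hab hn'))

end

/-!
Write `u = t^{1/n}`. A Laurent series in `u` splits into its polyphase components as
`x = ∑_{j<n} u^j x_j(uⁿ)`, where `(x_j)_k = x_{nk+j}`. The component `(·)_0` fixes series
in `t` and satisfies `(xy)_0 = ∑_{j<n} x_j y_{-j}`. Applying it coefficientwise to
`f = ∑ g'ᵢ h'ᵢ` gives `f = ∑_{i,j} (g'ᵢ)_j (h'ᵢ)_{-j}`: `rn` products whose factors have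
the degrees of `g'ᵢ, h'ᵢ` and stay bounded.
-/

namespace HahnSeries

variable {Γ Γ' R : Type*} [PartialOrder Γ] [PartialOrder Γ']

def comapDomain [Zero R] (f : Γ' ↪o Γ) (x : R⟦Γ⟧) : R⟦Γ'⟧ where
  coeff k := x.coeff (f k)
  isPWO_support' g := by
    obtain ⟨a, b, hab, hle⟩ := x.isPWO_support' fun i => ⟨f (g i), (g i).2⟩
    exact ⟨a, b, hab, f.le_iff_le.mp hle⟩

@[simp]
theorem comapDomain_coeff [Zero R] (f : Γ' ↪o Γ) (x : R⟦Γ⟧) (k : Γ') :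
    (comapDomain f x).coeff k = x.coeff (f k) :=
  rfl

def comapDomainAddMonoidHom [AddMonoid R] (f : Γ' ↪o Γ) : R⟦Γ⟧ →+ R⟦Γ'⟧ where
  toFun := comapDomain f
  map_zero' := by ext; simp
  map_add' x y := by ext; simp

end HahnSeries

namespace LaurentSeries

open HahnSeries

variable {R : Type*}

noncomputable def polyphase [AddMonoid R] (n : ℕ) (hn : 1 ≤ n) (c : ℤ) :
    LaurentSeries R →+ LaurentSeries R :=
  comapDomainAddMonoidHom <| OrderEmbedding.ofStrictMono (fun k : ℤ => n * k + c) fun _ _ hab => by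
    have : (0 : ℤ) < n := by exact_mod_cast hn
    simpa using mul_lt_mul_of_pos_left hab this

@[simp]
theorem polyphase_coeff [AddMonoid R] (n : ℕ) (hn : 1 ≤ n) (c : ℤ) (x : LaurentSeries R)
    (k : ℤ) :
    (polyphase n hn c x).coeff k = x.coeff (n * k + c) :=
  rfl

theorem polyphase_single_mul [Semiring R] (n : ℕ) (hn : 1 ≤ n) (c j : ℤ)
    (x : LaurentSeries R) :
    polyphase n hn c (single j 1 * x) = polyphase n hn (c - j) x := by
  ext k
  rw [polyphase_coeff, polyphase_coeff, show (n : ℤ) * k + c = n * k + (c - j) + j by ring,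
    coeff_single_mul_add, one_mul]

end LaurentSeries

open LaurentSeries HahnSeries

section Subst

variable (n : ℕ) (hn : 1 ≤ n)

theorem subst_coeff_mul (z : KK) (k : ℤ) : (subst n hn z).coeff (n * k) = z.coeff k :=
  embDomain_coeff (a := k)

theorem subst_coeff_of_not_dvd (z : KK) {b : ℤ} (hb : ¬(n : ℤ) ∣ b) :
    (subst n hn z).coeff b = 0 :=
  embDomain_of_notMem_range fun ⟨a, ha⟩ => hb ⟨a, ha.symm⟩

theorem subst_mul (y z : KK) : subst n hn (y * z) = subst n hn y * subst n hn z :=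
  embDomain_mul _ (fun _ _ => mul_add _ _ _) y z

theorem polyphase_zero_subst (z : KK) : polyphase n hn 0 (subst n hn z) = z := by
  ext k
  rw [polyphase_coeff, add_zero, subst_coeff_mul]

theorem polyphase_subst_of_not_dvd (z : KK) {c : ℤ} (hc : ¬(n : ℤ) ∣ c) :
    polyphase n hn c (subst n hn z) = 0 := by
  ext k
  refine subst_coeff_of_not_dvd n hn z fun hdvd => hc ?_
  simpa using (Int.dvd_add_right (dvd_mul_right _ k)).mp hdvd

theorem eq_sum_single_mul_subst_polyphase (x : KK) :
    x = ∑ j ∈ Finset.range n, single (j : ℤ) 1 * subst n hn (polyphase n hn j x) := by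
  ext a
  have hn' : (0 : ℤ) < n := by exact_mod_cast hn
  obtain ⟨r, hr⟩ : ∃ r : ℕ, (r : ℤ) = a % n :=
    ⟨_, Int.toNat_of_nonneg (Int.emod_nonneg a hn'.ne')⟩
  have hrn : r < n := by have := Int.emod_lt_of_pos a hn'; omega
  have hsub : ∀ j : ℕ, a = a - j + j := fun j => by ring
  rw [coeff_sum, Finset.sum_eq_single_of_mem r (Finset.mem_range.mpr hrn)]
  · have hdiv : a - r = n * (a / n) := by have := Int.mul_ediv_add_emod a n; omega
    rw [hsub r, coeff_single_mul_add, one_mul, hdiv, subst_coeff_mul, polyphase_coeff, ← hdiv,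
      sub_add_cancel]
  · intro j hj hne
    rw [hsub j, coeff_single_mul_add, one_mul]
    refine subst_coeff_of_not_dvd n hn _ fun ⟨q, hq⟩ => hne ?_
    have : a % n = j := by
      rw [show a = j + n * q by omega, Int.add_mul_emod_self_left,
        Int.emod_eq_of_lt (by omega) (by simp at hj; omega)]
    omega

theorem polyphase_zero_subst_mul (z y : KK) :
    polyphase n hn 0 (subst n hn z * y) = z * polyphase n hn 0 y := by
  conv_lhs => rw [eq_sum_single_mul_subst_polyphase n hn y]
  rw [Finset.mul_sum, map_sum, Finset.sum_eq_single_of_mem 0 (by simp; omega)]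
  · rw [mul_left_comm, ← subst_mul, Nat.cast_zero, polyphase_single_mul, sub_zero,
      polyphase_zero_subst]
  · intro l hl hne
    have hndvd : ¬(n : ℤ) ∣ -l := by
      rw [Int.dvd_neg, Int.natCast_dvd_natCast]
      exact Nat.not_dvd_of_pos_of_lt (by omega) (Finset.mem_range.mp hl)
    rw [mul_left_comm, ← subst_mul, polyphase_single_mul, zero_sub,
      polyphase_subst_of_not_dvd n hn _ hndvd]

theorem polyphase_subst_mul (c : ℤ) (z y : KK) :
    polyphase n hn c (subst n hn z * y) = z * polyphase n hn c y := by
  rw [show c = 0 - -c by ring, ← polyphase_single_mul, mul_left_comm, polyphase_zero_subst_mul,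
    polyphase_single_mul]

theorem polyphase_zero_mul (x y : KK) :
    polyphase n hn 0 (x * y) =
      ∑ j ∈ Finset.range n, polyphase n hn j x * polyphase n hn (-j) y := by
  conv_lhs => rw [eq_sum_single_mul_subst_polyphase n hn x]
  rw [Finset.sum_mul, map_sum]
  refine Finset.sum_congr rfl fun j _ => ?_
  rw [mul_assoc, polyphase_single_mul, zero_sub, polyphase_subst_mul]

end Subst

section Coefficientwise

variable (n : ℕ) (hn : 1 ≤ n)

theorem Homog.polyphase {e : ℕ} {g : El} (h : Homog e g) (c : ℤ) :
    Homog e (polyphase n hn c ∘ g) := fun m hm => by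
  rw [Function.comp_apply, h m hm, map_zero]

theorem Bdd.polyphase {g : El} (h : Bdd g) (c : ℤ) : Bdd (polyphase n hn c ∘ g) := by
  obtain ⟨N, hN⟩ := h
  refine ⟨N + c.natAbs, fun m k hk => hN m _ ?_⟩
  have : (n : ℤ) * k ≤ k := by nlinarith
  show (n : ℤ) * k + c < -N
  omega

theorem polyphase_zero_conv (G H : El) (m : ℕ →₀ ℕ) :
    polyphase n hn 0 (conv G H m) =
      ∑ j : Fin n, conv (polyphase n hn j ∘ G) (polyphase n hn (-j) ∘ H) m := by
  simp only [conv, map_sum, polyphase_zero_mul, Function.comp_apply]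
  rw [Finset.sum_comm]
  exact (Fin.sum_univ_eq_sum_range (fun j => _) n).symm

end Coefficientwise

theorem bounded_strength_general
    (r n d : ℕ) (hn : 1 ≤ n) (f : El)
    (h2 : ∃ G H : Fin r → El,
      (∀ i, ∃ e, 0 < e ∧ e < d ∧ Homog e (G i)) ∧
      (∀ i, ∃ e, 0 < e ∧ e < d ∧ Homog e (H i)) ∧
      (∀ i, Bdd (G i)) ∧ (∀ i, Bdd (H i)) ∧
      (fun m => subst n hn (f m)) = fun m => ∑ i, conv (G i) (H i) m) :
    ∃ a b : Fin (r * n) → El,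
      (∀ j, ∃ e, 0 < e ∧ e < d ∧ Homog e (a j) ∧ Bdd (a j)) ∧
      (∀ j, ∃ e, 0 < e ∧ e < d ∧ Homog e (b j) ∧ Bdd (b j)) ∧
      f = fun m => ∑ j, conv (a j) (b j) m := by
  obtain ⟨G, H, hG, hH, hGb, hHb, hsum⟩ := h2
  let ij : Fin (r * n) → Fin r × Fin n := finProdFinEquiv.symm
  refine ⟨fun k => polyphase n hn (ij k).2 ∘ G (ij k).1,
    fun k => polyphase n hn (-(ij k).2) ∘ H (ij k).1, fun k => ?_, fun k => ?_, ?_⟩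
  · obtain ⟨e, he, hed, hGe⟩ := hG (ij k).1
    exact ⟨e, he, hed, hGe.polyphase n hn _, (hGb _).polyphase n hn _⟩
  · obtain ⟨e, he, hed, hHe⟩ := hH (ij k).1
    exact ⟨e, he, hed, hHe.polyphase n hn _, (hHb _).polyphase n hn _⟩
  · funext m
    calc f m = polyphase n hn 0 (subst n hn (f m)) := (polyphase_zero_subst n hn _).symm
      _ = ∑ i, ∑ j : Fin n, conv (polyphase n hn j ∘ G i) (polyphase n hn (-j) ∘ H i) m := by
        rw [congrFun hsum m, map_sum]
        simp only [polyphase_zero_conv]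
      _ = _ := by
        rw [← finProdFinEquiv.sum_comp, Fintype.sum_prod_type]
        simp [ij]

/-- Let `K = ℂ((t))`, let `𝓡` be the inverse limit of the graded polynomial rings
`K[x_1, …, x_n]`, and `𝓡^♭ ⊆ 𝓡` the subring of elements with bounded denominators.
Suppose `f ∈ 𝓡^♭` is homogeneous of degree `d` with `f = ∑_{i=1}^r gᵢ hᵢ` for
homogeneous `gᵢ, hᵢ ∈ 𝓡` of positive degree `< d`, and suppose moreover that, after the
substitution `t = uⁿ`, `f = ∑_{i=1}^r g'ᵢ h'ᵢ` with `g'ᵢ, h'ᵢ` homogeneous of positive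
degree `< d`, defined over `K(t^{1/n})` and bounded.  Then `f` has strength at most
`r·n` in `𝓡^♭`: `f = ∑_{j=1}^{rn} aⱼ bⱼ` with `aⱼ, bⱼ ∈ 𝓡^♭` homogeneous of positive
degree `< d`. -/
theorem bounded_strength
    (r n d : ℕ) (hn : 1 ≤ n) (f : El)
    (hf : Homog d f) (hfb : Bdd f)
    (h1 : ∃ g h : Fin r → El,
      (∀ i, ∃ e, 0 < e ∧ e < d ∧ Homog e (g i)) ∧
      (∀ i, ∃ e, 0 < e ∧ e < d ∧ Homog e (h i)) ∧
      f = fun m => ∑ i, conv (g i) (h i) m)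
    (h2 : ∃ G H : Fin r → El,
      (∀ i, ∃ e, 0 < e ∧ e < d ∧ Homog e (G i)) ∧
      (∀ i, ∃ e, 0 < e ∧ e < d ∧ Homog e (H i)) ∧
      (∀ i, Bdd (G i)) ∧ (∀ i, Bdd (H i)) ∧
      (fun m => subst n hn (f m)) = fun m => ∑ i, conv (G i) (H i) m) :
    ∃ a b : Fin (r * n) → El,
      (∀ j, ∃ e, 0 < e ∧ e < d ∧ Homog e (a j) ∧ Bdd (a j)) ∧
      (∀ j, ∃ e, 0 < e ∧ e < d ∧ Homog e (b j) ∧ Bdd (b j)) ∧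
      f = fun m => ∑ j, conv (a j) (b j) m :=
  bounded_strength_general r n d hn f h2
end
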